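/- (Lemma 8, backward part: contractivity of the complement of the reachable set for the time-reversed system) Assume Σ : ẋ ∈ F(x) is forward complete and F is continuous with nonempty compact convex values. Let X_o ⊆ E, let ε̄ : E → ℝ be continuous with ε̄(x) > 0 for all x, and let K_ε̄ be the reachable set. Then for every continuous ε : E → ℝ with 0 ≤ ε(x) < ε̄(x) for all x: (i) every solution ψ of Σ⁻_ε on [0,T] with ψ(0) ∉ interior K_ε̄ satisfies ψ(t) ∉ interior K_ε̄ for all t ∈ [0,T]; (ii) for every x₀ ∈ frontier (E ∖ interior K_ε̄) and every solution ψ of Σ⁻_ε on [0,T] with T > 0 and ψ(0) = x₀ there exists T' ∈ (0,T] such that ψ(t) ∈ interior (E ∖ interior K_ε̄) for all t ∈ (0,T']; (iii) every solution ψ of Σ⁻_ε on [0,T] with ψ(0) ∉ closure K_ε̄ satisfies ψ(t) ∉ frontier K_ε̄ for all t ∈ (0,T]. -/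

import Mathlib

open MeasureTheory Set Pointwise Topology

noncomputable section

/-- Euclidean state space. -/
abbrev Euc (n : ℕ) := EuclideanSpace ℝ (Fin n)

/-- `φ` is a solution of the perturbed differential inclusion
`ẋ ∈ F(x) + ε(x)·𝔹` on the interval `I ⊆ ℝ`. -/
def IsSolution {n : ℕ} (F : Euc n → Set (Euc n)) (ε : Euc n → ℝ) (I : Set ℝ)
    (φ : ℝ → Euc n) : Prop :=
  ∃ g : ℝ → Euc n, LocallyIntegrable g volume ∧
    (∀ t₀ ∈ I, ∀ t ∈ I, φ t = φ t₀ + ∫ s in t₀..t, g s) ∧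
    (∀ᵐ s ∂volume, s ∈ I → g s ∈ F (φ s) + Metric.closedBall (0 : Euc n) (ε (φ s)))

/-- `F` is upper semicontinuous (as a set-valued map). -/
def USC {n : ℕ} (F : Euc n → Set (Euc n)) : Prop :=
  ∀ x : Euc n, ∀ r > (0:ℝ), ∃ δ > (0:ℝ), ∀ y : Euc n, ‖y - x‖ < δ →
    F y ⊆ {z | ∃ w ∈ F x, ‖z - w‖ ≤ r}

/-- `F` is lower semicontinuous (as a set-valued map). -/
def LSC {n : ℕ} (F : Euc n → Set (Euc n)) : Prop :=
  ∀ x : Euc n, ∀ v ∈ F x, ∀ r > (0:ℝ), ∃ δ > (0:ℝ), ∀ y : Euc n, ‖y - x‖ < δ →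
    ∃ w ∈ F y, ‖w - v‖ ≤ r

/-- `F` has nonempty, compact and convex values. -/
def NCCValues {n : ℕ} (F : Euc n → Set (Euc n)) : Prop :=
  ∀ x, (F x).Nonempty ∧ IsCompact (F x) ∧ Convex ℝ (F x)

/-- The inclusion `ẋ ∈ F(x)` is forward complete: solutions on compact intervals
extend to arbitrarily larger compact intervals. -/
def ForwardComplete {n : ℕ} (F : Euc n → Set (Euc n)) : Prop :=
  ∀ (a b : ℝ) (φ : ℝ → Euc n), IsSolution F (fun _ => 0) (Icc a b) φ →
    ∀ b' ≥ b, ∃ ψ : ℝ → Euc n, IsSolution F (fun _ => 0) (Icc a b') ψ ∧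
      ∀ t ∈ Icc a b, ψ t = φ t

/-- `Σ_ε` is safe with respect to `(Xo, Xu)`. -/
def SafeWrt {n : ℕ} (F : Euc n → Set (Euc n)) (ε : Euc n → ℝ)
    (Xo Xu : Set (Euc n)) : Prop :=
  ∀ (a b : ℝ) (φ : ℝ → Euc n), a ≤ 0 → 0 ≤ b →
    IsSolution F ε (Icc a b) φ → φ 0 ∈ Xo → ∀ t ∈ Icc a b, φ t ∉ Xu

/-- `Σ` is robustly safe with respect to `(Xo, Xu)`. -/
def RobustlySafe {n : ℕ} (F : Euc n → Set (Euc n)) (Xo Xu : Set (Euc n)) : Prop :=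
  ∃ ε : Euc n → ℝ, Continuous ε ∧ (∀ x, 0 < ε x) ∧ SafeWrt F ε Xo Xu

/-- The reachable set of `Σ_ε` from `Xo`. -/
def Reach {n : ℕ} (F : Euc n → Set (Euc n)) (ε : Euc n → ℝ) (Xo : Set (Euc n)) :
    Set (Euc n) :=
  {y | ∃ t ≥ (0:ℝ), ∃ φ : ℝ → Euc n, IsSolution F ε (Icc 0 t) φ ∧ φ 0 ∈ Xo ∧ φ t = y}

/-- `φ` (with domain `I`) is a forward-maximal solution of `Σ_ε`. -/
def IsForwardMaximal {n : ℕ} (F : Euc n → Set (Euc n)) (ε : Euc n → ℝ)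
    (φ : ℝ → Euc n) (I : Set ℝ) : Prop :=
  (I = Ici (0:ℝ) ∧ IsSolution F ε I φ) ∨
  (∃ T : ℝ, 0 < T ∧ I = Ico 0 T ∧ IsSolution F ε I φ ∧
    ¬ ∃ ψ : ℝ → Euc n, IsSolution F ε (Icc 0 T) ψ ∧ ∀ t ∈ Ico 0 T, ψ t = φ t)

/-- `K` is locally recurrent for `Σ_ε` on `U₁`. -/
def LocallyRecurrent {n : ℕ} (F : Euc n → Set (Euc n)) (ε : Euc n → ℝ)
    (K U₁ : Set (Euc n)) : Prop :=
  ∀ (φ : ℝ → Euc n) (I : Set ℝ), IsForwardMaximal F ε φ I → φ 0 ∈ U₁ →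
    ∃ t ∈ I, φ t ∈ interior K

/-- `K` is forward contractive for `Σ_ε`. -/
def ForwardContractive {n : ℕ} (F : Euc n → Set (Euc n)) (ε : Euc n → ℝ)
    (K : Set (Euc n)) : Prop :=
  (∀ (T : ℝ) (φ : ℝ → Euc n), IsSolution F ε (Icc 0 T) φ → φ 0 ∈ K →
    ∀ t ∈ Icc 0 T, φ t ∈ K) ∧
  (∀ x₀ ∈ frontier K, ∀ T : ℝ, 0 < T → ∀ φ : ℝ → Euc n,
    IsSolution F ε (Icc 0 T) φ → φ 0 = x₀ →
    ∃ T' ∈ Ioc (0:ℝ) T, ∀ t ∈ Ioc (0:ℝ) T', φ t ∈ interior K)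

/-- Assumption (A6) for a closed set `K` with closed neighborhood set `U₁`. -/
def AssumptionA6 {n : ℕ} (F : Euc n → Set (Euc n)) (K U₁ : Set (Euc n)) : Prop :=
  IsClosed U₁ ∧ frontier K ⊆ interior U₁ ∧
  LocallyRecurrent F (fun _ => 0) K U₁ ∧
  LocallyRecurrent (fun x => -F x) (fun _ => 0) Kᶜ U₁ ∧
  ForwardContractive F (fun _ => 0) K ∧
  ForwardContractive (fun x => -F x) (fun _ => 0) (interior K)ᶜ

/-- Pointwise uniform LSC: `F x ⊆ F y + r𝔹` for `y` near `x`. -/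
lemma ptwise_lsc {n : ℕ} {F : Euc n → Set (Euc n)} (hLSC : LSC F) (hVal : NCCValues F)
    (x : Euc n) {r : ℝ} (hr : 0 < r) :
    ∃ δ > (0:ℝ), ∀ y : Euc n, ‖y - x‖ < δ → ∀ w ∈ F x, ∃ w' ∈ F y, ‖w - w'‖ ≤ r := by
  obtain ⟨hne, hcpt, -⟩ := hVal x
  -- cover F x by balls of radius r/2 centered at points of F x
  have hcov : F x ⊆ ⋃ v : F x, Metric.ball (v : Euc n) (r / 2) := by
    intro w hw
    exact Set.mem_iUnion.2 ⟨⟨w, hw⟩, by simpa using half_pos hr⟩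
  obtain ⟨S, hS⟩ := hcpt.elim_finite_subcover (fun v : F x => Metric.ball (v : Euc n) (r / 2))
    (fun v => Metric.isOpen_ball) hcov
  -- S nonempty since F x nonempty
  have hSne : S.Nonempty := by
    obtain ⟨w, hw⟩ := hne
    obtain ⟨v, hv, -⟩ := Set.mem_iUnion₂.1 (hS hw)
    exact ⟨v, hv⟩
  -- choose δ for each center
  have hδ : ∀ v : F x, ∃ δ > (0:ℝ), ∀ y : Euc n, ‖y - x‖ < δ →
      ∃ w ∈ F y, ‖w - (v : Euc n)‖ ≤ r / 2 :=
    fun v => hLSC x v v.2 (r / 2) (half_pos hr)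
  choose δf hδf hδf2 using hδ
  refine ⟨S.inf' hSne δf, (Finset.lt_inf'_iff _).2 fun v _ => hδf v, fun y hy w hw => ?_⟩
  obtain ⟨v, hvS, hwv⟩ := Set.mem_iUnion₂.1 (hS hw)
  obtain ⟨w', hw', hww'⟩ := hδf2 v y (lt_of_lt_of_le hy (Finset.inf'_le _ hvS))
  refine ⟨w', hw', ?_⟩
  have h1 : ‖w - (v : Euc n)‖ < r / 2 := by
    simpa [dist_eq_norm] using hwv
  calc ‖w - w'‖ ≤ ‖w - (v:Euc n)‖ + ‖(v:Euc n) - w'‖ := norm_sub_le_norm_sub_add_norm_sub _ _ _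
    _ ≤ r / 2 + r / 2 := by
        refine add_le_add h1.le ?_
        simpa [norm_sub_rev] using hww'
    _ = r := by ring

/-- Uniform LSC over a compact set of base points. -/
lemma unif_lsc {n : ℕ} {F : Euc n → Set (Euc n)} (hUSC : USC F) (hLSC : LSC F)
    (hVal : NCCValues F) {C : Set (Euc n)} (hC : IsCompact C) {r : ℝ} (hr : 0 < r) :
    ∃ δ > (0:ℝ), ∀ x ∈ C, ∀ y : Euc n, ‖y - x‖ < δ →
      ∀ w ∈ F x, ∃ w' ∈ F y, ‖w - w'‖ ≤ r := by
  rcases C.eq_empty_or_nonempty with hCe | hCne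
  · exact ⟨1, one_pos, by simp [hCe]⟩
  have hη : ∀ x : C, ∃ η > (0:ℝ), (∀ y : Euc n, ‖y - (x:Euc n)‖ < η →
      F y ⊆ {z | ∃ w ∈ F (x:Euc n), ‖z - w‖ ≤ r / 2}) ∧
      (∀ y : Euc n, ‖y - (x:Euc n)‖ < η → ∀ w ∈ F (x:Euc n), ∃ w' ∈ F y, ‖w - w'‖ ≤ r / 2) := by
    intro x
    obtain ⟨η₁, hη₁, hU⟩ := hUSC (x : Euc n) (r / 2) (half_pos hr)
    obtain ⟨η₂, hη₂, hL⟩ := ptwise_lsc hLSC hVal (x : Euc n) (half_pos hr)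
    exact ⟨min η₁ η₂, lt_min hη₁ hη₂,
      fun y hy => hU y (lt_of_lt_of_le hy (min_le_left _ _)),
      fun y hy => hL y (lt_of_lt_of_le hy (min_le_right _ _))⟩
  choose η hηpos hη1 hη2 using hη
  have hcov : C ⊆ ⋃ x : C, Metric.ball (x : Euc n) (η x / 2) := by
    intro x hx
    exact Set.mem_iUnion.2 ⟨⟨x, hx⟩, by simpa using half_pos (hηpos ⟨x, hx⟩)⟩
  obtain ⟨S, hS⟩ := hC.elim_finite_subcover (fun x : C => Metric.ball (x : Euc n) (η x / 2))
    (fun _ => Metric.isOpen_ball) hcov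
  have hSne : S.Nonempty := by
    obtain ⟨x, hx⟩ := hCne
    obtain ⟨v, hv, -⟩ := Set.mem_iUnion₂.1 (hS hx)
    exact ⟨v, hv⟩
  refine ⟨S.inf' hSne (fun x => η x / 2),
    (Finset.lt_inf'_iff _).2 fun v _ => half_pos (hηpos v), fun x hx y hy w hw => ?_⟩
  obtain ⟨v, hvS, hxv⟩ := Set.mem_iUnion₂.1 (hS hx)
  have hxv' : ‖x - (v : Euc n)‖ < η v / 2 := by simpa [dist_eq_norm] using hxv
  have hyδ : ‖y - x‖ < η v / 2 := lt_of_lt_of_le hy (Finset.inf'_le _ hvS)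
  -- x is η v-close to v, y is η v-close to v
  have hxclose : ‖x - (v : Euc n)‖ < η v := hxv'.trans (by linarith [hηpos v])
  have hyclose : ‖y - (v : Euc n)‖ < η v := by
    calc ‖y - (v : Euc n)‖ ≤ ‖y - x‖ + ‖x - (v:Euc n)‖ := norm_sub_le_norm_sub_add_norm_sub _ _ _
      _ < η v / 2 + η v / 2 := add_lt_add hyδ hxv'
      _ = η v := by ring
  obtain ⟨u, hu, hwu⟩ := hη1 v x hxclose hw
  obtain ⟨w', hw', huw'⟩ := hη2 v y hyclose u hu
  refine ⟨w', hw', ?_⟩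
  calc ‖w - w'‖ ≤ ‖w - u‖ + ‖u - w'‖ := norm_sub_le_norm_sub_add_norm_sub _ _ _
    _ ≤ r / 2 + r / 2 := add_le_add hwu huw'
    _ = r := by ring

/-- Uniform continuity of a continuous real function near a compact set. -/
lemma unif_cont_near_compact {n : ℕ} {f : Euc n → ℝ} (hf : Continuous f)
    {C : Set (Euc n)} (hC : IsCompact C) {r : ℝ} (hr : 0 < r) :
    ∃ δ > (0:ℝ), ∀ x ∈ C, ∀ y : Euc n, ‖y - x‖ < δ → |f y - f x| < r := by
  have hC1 : IsCompact (Metric.cthickening 1 C) := hC.cthickening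
  have huc : UniformContinuousOn f (Metric.cthickening 1 C) :=
    hC1.uniformContinuousOn_of_continuous hf.continuousOn
  obtain ⟨δ, hδ, h⟩ := (Metric.uniformContinuousOn_iff).1 huc r hr
  refine ⟨min δ 1, lt_min hδ one_pos, fun x hx y hy => ?_⟩
  have hxC1 : x ∈ Metric.cthickening 1 C := Metric.self_subset_cthickening C hx
  have hyC1 : y ∈ Metric.cthickening 1 C := by
    apply Metric.mem_cthickening_of_dist_le y x 1 C hx
    rw [dist_eq_norm]
    exact le_of_lt (lt_of_lt_of_le hy (min_le_right _ _))
  have := h y hyC1 x hxC1 (by rw [dist_eq_norm]; exact lt_of_lt_of_le hy (min_le_left _ _))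
  rwa [Real.dist_eq] at this

/-- Composition with `c - ·` preserves local integrability. -/
lemma locInt_comp_sub_left {n : ℕ} {g : ℝ → Euc n} (hg : LocallyIntegrable g volume) (c : ℝ) :
    LocallyIntegrable (fun s => g (c - s)) volume := by
  rw [MeasureTheory.locallyIntegrable_iff] at hg ⊢
  intro K hK
  have h1 : IntegrableOn g ((fun x : ℝ => c - x) '' K) volume := hg _ (hK.image (by continuity))
  have hmp : MeasurePreserving (fun x : ℝ => c - x) volume volume :=
    Measure.measurePreserving_sub_left volume c
  have hemb : MeasurableEmbedding (fun x : ℝ => c - x) :=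
    (Homeomorph.subLeft c).measurableEmbedding
  have := (hmp.integrableOn_comp_preimage hemb (s := (fun x : ℝ => c - x) '' K)).2 h1
  rwa [Set.preimage_image_eq _ (fun a b h => by simpa using h)] at this


lemma locInt_intervalIntegrable {n : ℕ} {g : ℝ → Euc n} (hg : LocallyIntegrable g volume)
    (a b : ℝ) : IntervalIntegrable g volume a b := by
  rw [intervalIntegrable_iff]
  exact (hg.integrableOn_isCompact isCompact_uIcc).mono_set Set.uIoc_subset_uIcc

/-- Key Lemma A. -/
lemma lemmaA {n : ℕ} {F : Euc n → Set (Euc n)}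
    (hUSC : USC F) (hLSC : LSC F) (hVal : NCCValues F)
    (Xo : Set (Euc n)) (εbar : Euc n → ℝ) (hεbar : Continuous εbar)
    (ε : Euc n → ℝ) (hε : Continuous ε) (hεlt : ∀ x, 0 ≤ ε x ∧ ε x < εbar x)
    (T : ℝ) (ψ : ℝ → Euc n) (hψ : IsSolution (fun x => -F x) ε (Icc 0 T) ψ)
    (t : ℝ) (ht : t ∈ Ioc 0 T) :
    ∃ δ > (0:ℝ), ∀ d : Euc n, ‖d‖ < δ → ψ t + d ∈ Reach F εbar Xo →
      ψ 0 ∈ interior (Reach F εbar Xo) := by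
  obtain ⟨g, hgli, hgint, hgmem⟩ := hψ
  obtain ⟨ht0, htT⟩ := ht
  have hT0 : (0:ℝ) ≤ T := le_trans ht0.le htT
  have h0T : (0:ℝ) ∈ Icc 0 T := ⟨le_refl _, hT0⟩
  -- continuity of ψ on [0, T]
  have hcont : ContinuousOn ψ (Icc 0 T) := by
    have hc : Continuous (fun u => ψ 0 + ∫ s in (0:ℝ)..u, g s) :=
      continuous_const.add (intervalIntegral.continuous_primitive
        (fun a b => locInt_intervalIntegrable hgli a b) 0)
    exact hc.continuousOn.congr (fun u hu => hgint 0 h0T u hu)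
  set C : Set (Euc n) := ψ '' (Icc 0 t) with hCdef
  have hCcp : IsCompact C :=
    (isCompact_Icc).image_of_continuousOn (hcont.mono (Icc_subset_Icc le_rfl htT))
  have hCne : C.Nonempty := ⟨ψ 0, ⟨0, ⟨le_refl _, ht0.le⟩, rfl⟩⟩
  -- minimum slack m on C
  obtain ⟨xm, hxmC, hmin⟩ := hCcp.exists_isMinOn hCne (hεbar.sub hε).continuousOn
  set m : ℝ := εbar xm - ε xm with hmdef
  have hm : 0 < m := sub_pos.2 (hεlt xm).2
  have hslack : ∀ x ∈ C, m ≤ εbar x - ε x := fun x hx => hmin hx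
  have hm4 : 0 < m / 4 := by linarith
  obtain ⟨δ₁, hδ₁, hF⟩ := unif_lsc hUSC hLSC hVal hCcp hm4
  obtain ⟨δ₂, hδ₂, hεb⟩ := unif_cont_near_compact hεbar hCcp hm4
  set δ : ℝ := min δ₁ δ₂ with hδdef
  have hδpos : 0 < δ := lt_min hδ₁ hδ₂
  set ρ : ℝ := min (δ / 2) (t * (m / 4)) with hρdef
  have hρpos : 0 < ρ := lt_min (by linarith) (by positivity)
  have hρδ : ρ ≤ δ / 2 := min_le_left _ _
  have hρt : ρ ≤ t * (m / 4) := min_le_right _ _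
  refine ⟨ρ, hρpos, fun d hd hdK => ?_⟩
  -- Claim: the whole ball of radius ρ around ψ 0 + d lies in the reachable set.
  have claim : ∀ z : Euc n, ‖z‖ < ρ → ψ 0 + d + z ∈ Reach F εbar Xo := by
    intro z hz
    obtain ⟨s₀, hs₀, χ, ⟨gχ, hgχli, hgχint, hgχmem⟩, hχ0, hχend⟩ := hdK
    set c : ℝ := t + s₀ with hcdef
    set φt : ℝ → Euc n := fun τ => ψ (t - τ) + d + (τ / t) • z with hφtdef
    set G : ℝ → Euc n := fun s => if s < s₀ then gχ s else -g (c - s) + t⁻¹ • z with hGdef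
    set Φ : ℝ → Euc n := fun s => if s < s₀ then χ s else φt (s - s₀) with hΦdef
    have hφt0 : φt 0 = ψ t + d := by
      simp [hφtdef]
    have hΦs₀ : Φ s₀ = χ s₀ := by
      simp only [hΦdef, lt_irrefl, if_false, sub_self]
      rw [hφt0, hχend]
    have hΦlt : ∀ s, s < s₀ → Φ s = χ s := fun s hs => if_pos hs
    have hΦle : ∀ s, s ≤ s₀ → Φ s = χ s := by
      intro s hs
      rcases lt_or_eq_of_le hs with h | h
      · exact if_pos h
      · rw [h]; exact hΦs₀
    have hΦge : ∀ s, s₀ ≤ s → Φ s = φt (s - s₀) := fun s hs => if_neg (not_lt.2 hs)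
    have hΦ0 : Φ 0 = χ 0 := hΦle 0 hs₀
    -- local integrability of G
    have hG2li : LocallyIntegrable (fun s => -g (c - s) + t⁻¹ • z) volume :=
      ((locInt_comp_sub_left hgli c).neg).add (locallyIntegrable_const _)
    have hGli : LocallyIntegrable G volume := by
      have : G = (Iio s₀).indicator gχ +
          ((Iio s₀)ᶜ).indicator (fun s => -g (c - s) + t⁻¹ • z) := by
        funext s
        by_cases hs : s < s₀
        · simp [hGdef, Set.indicator, hs, Set.mem_Iio]
        · simp [hGdef, Set.indicator, hs, Set.mem_Iio, not_lt.1 hs]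
      rw [this]
      exact (hgχli.indicator measurableSet_Iio).add
        (hG2li.indicator measurableSet_Iio.compl)
    have hGii : ∀ a b : ℝ, IntervalIntegrable G volume a b :=
      fun a b => locInt_intervalIntegrable hGli a b
    -- integral of G on [0, u] for u ≤ s₀
    have hcomp1 : ∀ u ∈ Icc 0 s₀, ∫ s in (0:ℝ)..u, G s = χ u - χ 0 := by
      intro u hu
      have hne : ∀ᵐ s : ℝ, s ≠ s₀ := by
        refine (MeasureTheory.ae_iff).2 ?_
        simpa using Real.volume_singleton (a := s₀)
      have hcongr : ∫ s in (0:ℝ)..u, G s = ∫ s in (0:ℝ)..u, gχ s := by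
        apply intervalIntegral.integral_congr_ae
        filter_upwards [hne] with s hs hmem
        rw [Set.uIoc_of_le hu.1] at hmem
        have : s < s₀ := lt_of_le_of_ne (le_trans hmem.2 hu.2) hs
        simp [hGdef, this]
      rw [hcongr]
      have := hgχint 0 ⟨le_refl _, hs₀⟩ u hu
      rw [this]; abel
    -- integral of the reversed field on [0, τ] for τ ≤ t
    have hcomp2 : ∀ τ ∈ Icc 0 t, ∫ s in (0:ℝ)..τ, (-g (t - s) + t⁻¹ • z) =
        ψ (t - τ) - ψ t + (τ / t) • z := by
      intro τ hτ
      have hi1 : IntervalIntegrable (fun s => -g (t - s)) volume 0 τ :=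
        locInt_intervalIntegrable (locInt_comp_sub_left hgli t).neg 0 τ
      have hi2 : IntervalIntegrable (fun _ : ℝ => t⁻¹ • z) volume 0 τ :=
        intervalIntegrable_const
      rw [intervalIntegral.integral_add hi1 hi2]
      have h1 : ∫ s in (0:ℝ)..τ, -g (t - s) = -(∫ s in (0:ℝ)..τ, g (t - s)) :=
        intervalIntegral.integral_neg
      have h2 : ∫ s in (0:ℝ)..τ, g (t - s) = ∫ s in (t - τ)..(t - 0), g s :=
        intervalIntegral.integral_comp_sub_left g t
      have htτ : t - τ ∈ Icc 0 T := ⟨by linarith [hτ.2], by linarith [hτ.1]⟩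
      have htI : t ∈ Icc 0 T := ⟨ht0.le, htT⟩
      have h3 : ψ t = ψ (t - τ) + ∫ s in (t - τ)..t, g s := hgint (t - τ) htτ t htI
      have h4 : ∫ s in (0:ℝ)..τ, (fun _ : ℝ => t⁻¹ • z) s = (τ / t) • z := by
        rw [intervalIntegral.integral_const, sub_zero, smul_smul, div_eq_mul_inv]
      rw [h1, h2, h4, sub_zero]
      have : ∫ s in (t - τ)..t, g s = ψ t - ψ (t - τ) := by rw [h3]; abel
      rw [this]; abel
    -- the primitive identity for Φ
    have hkey : ∀ u ∈ Icc 0 (s₀ + t), ∫ s in (0:ℝ)..u, G s = Φ u - Φ 0 := by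
      intro u hu
      rcases le_or_gt u s₀ with hus | hus
      · rw [hcomp1 u ⟨hu.1, hus⟩, hΦle u hus, hΦ0]
      · have hsplit : ∫ s in (0:ℝ)..u, G s =
            (∫ s in (0:ℝ)..s₀, G s) + ∫ s in s₀..u, G s :=
          (intervalIntegral.integral_add_adjacent_intervals (hGii 0 s₀) (hGii s₀ u)).symm
        have hτmem : u - s₀ ∈ Icc 0 t := ⟨by linarith, by linarith [hu.2]⟩
        have hmid : ∫ s in s₀..u, G s = ∫ s in s₀..u,
            (fun x => -g (t - (x - s₀)) + t⁻¹ • z) s := by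
          apply intervalIntegral.integral_congr
          intro s hs
          rw [Set.uIcc_of_le hus.le] at hs
          have : ¬ s < s₀ := not_lt.2 hs.1
          simp only [hGdef, if_neg this, hcdef]
          ring_nf
        have hsub : ∫ s in s₀..u, (fun x => -g (t - (x - s₀)) + t⁻¹ • z) s =
            ∫ s in (s₀ - s₀)..(u - s₀), (-g (t - s) + t⁻¹ • z) :=
          intervalIntegral.integral_comp_sub_right (fun s => -g (t - s) + t⁻¹ • z) s₀
        rw [hsplit, hmid, hsub, sub_self,
          hcomp1 s₀ ⟨hs₀, le_refl _⟩, hcomp2 (u - s₀) hτmem,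
          hΦge u hus.le, hΦ0, hφtdef]
        simp only []
        rw [hχend]
        abel
    have hsol : ∀ u₀ ∈ Icc 0 (s₀ + t), ∀ u ∈ Icc 0 (s₀ + t),
        Φ u = Φ u₀ + ∫ s in u₀..u, G s := by
      intro u₀ hu₀ u hu
      have hdiff : (∫ s in (0:ℝ)..u, G s) - ∫ s in (0:ℝ)..u₀, G s = ∫ s in u₀..u, G s :=
        intervalIntegral.integral_interval_sub_left (hGii 0 u) (hGii 0 u₀)
      rw [← hdiff, hkey u hu, hkey u₀ hu₀]
      abel
    -- a.e. differential inclusion for Φ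
    have hψae' : ∀ᵐ s : ℝ, (c - s) ∈ Icc 0 T →
        g (c - s) ∈ -F (ψ (c - s)) + Metric.closedBall (0 : Euc n) (ε (ψ (c - s))) :=
      (Measure.measurePreserving_sub_left volume c).quasiMeasurePreserving.ae hgmem
    have hincl : ∀ᵐ s ∂(volume : Measure ℝ), s ∈ Icc 0 (s₀ + t) →
        G s ∈ F (Φ s) + Metric.closedBall (0 : Euc n) (εbar (Φ s)) := by
      filter_upwards [hgχmem, hψae'] with s h1 h2 hs
      by_cases hss : s < s₀
      · have hsIcc : s ∈ Icc 0 s₀ := ⟨hs.1, hss.le⟩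
        have := h1 hsIcc
        simpa [hGdef, hΦdef, if_pos hss] using this
      · push_neg at hss
        set τ : ℝ := s - s₀ with hτdef
        have hτmem : τ ∈ Icc 0 t := ⟨by linarith, by linarith [hs.2]⟩
        have hu : t - τ ∈ Icc 0 T := ⟨by linarith [hτmem.2], by linarith [hτmem.1]⟩
        have hcs : c - s = t - τ := by rw [hcdef, hτdef]; ring
        have hgm : g (t - τ) ∈ -F (ψ (t - τ)) +
            Metric.closedBall (0 : Euc n) (ε (ψ (t - τ))) := by
          have := h2 (by rw [hcs]; exact hu)
          rwa [hcs] at this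
        obtain ⟨p, hp, b, hb, heq⟩ := Set.mem_add.1 hgm
        have hw : -p ∈ F (ψ (t - τ)) := Set.mem_neg.1 hp
        have hbn : ‖b‖ ≤ ε (ψ (t - τ)) := mem_closedBall_zero_iff.1 hb
        have hxC : ψ (t - τ) ∈ C := ⟨t - τ, ⟨by linarith [hτmem.2], by linarith [hτmem.1]⟩, rfl⟩
        -- deviation of the translated trajectory
        have hdev : ‖φt τ - ψ (t - τ)‖ < δ := by
          have he : φt τ - ψ (t - τ) = d + (τ / t) • z := by
            rw [hφtdef]; beta_reduce; rw [add_assoc, add_sub_cancel_left]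
          rw [he]
          have h1n : ‖(τ / t) • z‖ ≤ ‖z‖ := by
            rw [norm_smul]
            have h01 : |τ / t| ≤ 1 := by
              rw [abs_of_nonneg (div_nonneg hτmem.1 ht0.le)]
              exact div_le_one_of_le₀ hτmem.2 ht0.le
            calc |τ / t| * ‖z‖ ≤ 1 * ‖z‖ :=
                mul_le_mul_of_nonneg_right h01 (norm_nonneg _)
              _ = ‖z‖ := one_mul _
          calc ‖d + (τ / t) • z‖ ≤ ‖d‖ + ‖(τ / t) • z‖ := norm_add_le _ _
            _ ≤ ‖d‖ + ‖z‖ := by linarith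
            _ < ρ + ρ := add_lt_add hd hz
            _ ≤ δ := by linarith [hρδ]
        obtain ⟨w', hw', hww'⟩ := hF (ψ (t - τ)) hxC (φt τ)
          (lt_of_lt_of_le hdev (min_le_left _ _)) (-p) hw
        have hεbb : |εbar (φt τ) - εbar (ψ (t - τ))| < m / 4 :=
          hεb (ψ (t - τ)) hxC (φt τ) (lt_of_lt_of_le hdev (min_le_right _ _))
        have hzn : ‖t⁻¹ • z‖ ≤ m / 4 := by
          rw [norm_smul, Real.norm_eq_abs, abs_of_nonneg (inv_nonneg.2 ht0.le)]
          have : t⁻¹ * ‖z‖ ≤ t⁻¹ * (t * (m / 4)) :=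
            mul_le_mul_of_nonneg_left (le_trans hz.le hρt) (inv_nonneg.2 ht0.le)
          rwa [inv_mul_cancel_left₀ ht0.ne'] at this
        have hGs : G s = -g (c - s) + t⁻¹ • z := if_neg (not_lt.2 hss)
        have hgeq : -g (c - s) = -p - b := by
          rw [hcs, ← heq]; abel
        have hslk : m ≤ εbar (ψ (t - τ)) - ε (ψ (t - τ)) := hslack _ hxC
        -- assemble membership
        have hresid : ‖G s - w'‖ ≤ εbar (φt τ) := by
          have hre : G s - w' = (-p - w') + (-b + t⁻¹ • z) := by
            rw [hGs, hgeq]; abel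
          have h1n : ‖-p - w'‖ ≤ m / 4 := hww'
          calc ‖G s - w'‖ ≤ ‖-p - w'‖ + ‖-b + t⁻¹ • z‖ := by
                rw [hre]; exact norm_add_le _ _
            _ ≤ ‖-p - w'‖ + (‖b‖ + ‖t⁻¹ • z‖) := by
                gcongr
                calc ‖-b + t⁻¹ • z‖ ≤ ‖-b‖ + ‖t⁻¹ • z‖ := norm_add_le _ _
                  _ = ‖b‖ + ‖t⁻¹ • z‖ := by rw [norm_neg]
            _ ≤ m / 4 + (ε (ψ (t - τ)) + m / 4) :=
                add_le_add h1n (add_le_add hbn hzn)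
            _ ≤ εbar (φt τ) := by
                have habs := abs_lt.1 hεbb
                linarith [habs.1, habs.2]
        have hΦs : Φ s = φt τ := hΦge s hss
        rw [hΦs]
        exact Set.mem_add.2 ⟨w', hw', G s - w',
          mem_closedBall_zero_iff.2 hresid, by abel⟩
    -- conclude: Φ is a solution reaching ψ 0 + d + z
    refine ⟨s₀ + t, by linarith, Φ, ⟨G, hGli, hsol, hincl⟩, ?_, ?_⟩
    · rw [hΦ0]; exact hχ0
    · have : Φ (s₀ + t) = φt t := by
        rw [hΦge (s₀ + t) (by linarith)]
        congr 1
        ring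
      rw [this, hφtdef]
      simp only []
      rw [sub_self, div_self ht0.ne', one_smul]
  -- from the claim, conclude interior membership
  refine mem_interior.2 ⟨Metric.ball (ψ 0 + d) ρ, ?_, Metric.isOpen_ball, ?_⟩
  · intro y hy
    have hz : ‖y - (ψ 0 + d)‖ < ρ := by rwa [Metric.mem_ball, dist_eq_norm] at hy
    have := claim (y - (ψ 0 + d)) hz
    simpa using this
  · rw [Metric.mem_ball, dist_eq_norm]
    simpa using (by simpa [norm_neg] using hd : ‖-d‖ < ρ)

/-- Lemma 8, backward part: contractivity of the complement of the reachable
set for the time-reversed system. -/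
theorem lemma8_backward_contractivity {n : ℕ} (hn : 1 ≤ n)
    (F : Euc n → Set (Euc n))
    (hFC : ForwardComplete F) (hUSC : USC F) (hLSC : LSC F) (hVal : NCCValues F)
    (Xo : Set (Euc n)) (εbar : Euc n → ℝ) (hεbar : Continuous εbar)
    (hεbarpos : ∀ x, 0 < εbar x)
    (ε : Euc n → ℝ) (hε : Continuous ε) (hεlt : ∀ x, 0 ≤ ε x ∧ ε x < εbar x) :
    (∀ (T : ℝ) (ψ : ℝ → Euc n), IsSolution (fun x => -F x) ε (Icc 0 T) ψ →
      ψ 0 ∉ interior (Reach F εbar Xo) →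
      ∀ t ∈ Icc (0:ℝ) T, ψ t ∉ interior (Reach F εbar Xo)) ∧
    (∀ x₀ ∈ frontier ((interior (Reach F εbar Xo))ᶜ), ∀ T : ℝ, 0 < T →
      ∀ ψ : ℝ → Euc n, IsSolution (fun x => -F x) ε (Icc 0 T) ψ → ψ 0 = x₀ →
        ∃ T' ∈ Ioc (0:ℝ) T, ∀ t ∈ Ioc (0:ℝ) T',
          ψ t ∈ interior ((interior (Reach F εbar Xo))ᶜ)) ∧
    (∀ (T : ℝ) (ψ : ℝ → Euc n), IsSolution (fun x => -F x) ε (Icc 0 T) ψ →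
      ψ 0 ∉ closure (Reach F εbar Xo) →
      ∀ t ∈ Ioc (0:ℝ) T, ψ t ∉ frontier (Reach F εbar Xo)) := by
  set K := Reach F εbar Xo with hK
  refine ⟨?_, ?_, ?_⟩
  · -- (i)
    intro T ψ hψ h0 t ht hc
    rcases eq_or_lt_of_le ht.1 with h | h
    · exact h0 (h ▸ hc)
    · obtain ⟨δ, hδ, hA⟩ := lemmaA hUSC hLSC hVal Xo εbar hεbar ε hε hεlt T ψ hψ t ⟨h, ht.2⟩
      exact h0 (hA 0 (by simpa using hδ) (by simpa using interior_subset hc))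
  · -- (ii)
    intro x₀ hx₀ T hT ψ hψ hψ0
    have hx₀' : x₀ ∉ interior K := by
      have h1 : x₀ ∈ closure ((interior K)ᶜ) := frontier_subset_closure hx₀
      rwa [closure_compl, interior_interior, Set.mem_compl_iff] at h1
    refine ⟨T, ⟨hT, le_refl _⟩, fun t ht => ?_⟩
    rw [interior_compl, Set.mem_compl_iff]
    intro hc
    obtain ⟨δ, hδ, hA⟩ := lemmaA hUSC hLSC hVal Xo εbar hεbar ε hε hεlt T ψ hψ t ht
    obtain ⟨y, hyK, hyd⟩ := Metric.mem_closure_iff.1 hc δ hδ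
    have hd : ‖y - ψ t‖ < δ := by rwa [← dist_eq_norm, dist_comm]
    have hyK' : ψ t + (y - ψ t) ∈ K := by
      simpa using interior_subset hyK
    exact hx₀' (hψ0 ▸ hA (y - ψ t) hd hyK')
  · -- (iii)
    intro T ψ hψ h0 t ht hc
    obtain ⟨δ, hδ, hA⟩ := lemmaA hUSC hLSC hVal Xo εbar hεbar ε hε hεlt T ψ hψ t ht
    obtain ⟨y, hyK, hyd⟩ := Metric.mem_closure_iff.1 (frontier_subset_closure hc) δ hδ
    have hd : ‖y - ψ t‖ < δ := by rwa [← dist_eq_norm, dist_comm]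
    have hyK' : ψ t + (y - ψ t) ∈ K := by simpa using hyK
    exact h0 (closure_mono interior_subset (subset_closure (hA (y - ψ t) hd hyK')))
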